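/- The real number λ = log((7-√13)/6) / log((2+√13)/3) is irrational. -/
import Mathlib

/-- 13 is not a perfect square in ℤ. -/
lemma thirteen_not_square : ∀ n : ℤ, (13 : ℤ) ≠ n * n := by
  intro n h
  have h4 : n.natAbs * n.natAbs = 13 := by
    have := congrArg Int.natAbs h
    simpa [Int.natAbs_mul] using this.symm
  have h5 : n.natAbs < 4 := by nlinarith
  interval_cases n.natAbs <;> omega

/-- The real number `λ = log((7-√13)/6) / log((2+√13)/3)` (characterized by
`((2+√13)/3)^λ = (7-√13)/6`) is irrational. -/
theorem lambda_irrational :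
    Irrational (Real.log ((7 - Real.sqrt 13) / 6) / Real.log ((2 + Real.sqrt 13) / 3)) := by
  rintro ⟨q, hq⟩
  set s := Real.sqrt 13 with hs
  have hs0 : 0 ≤ s := Real.sqrt_nonneg 13
  have hs2 : s * s = 13 := Real.mul_self_sqrt (by norm_num)
  have hs3 : 3 < s := by nlinarith
  have hs4 : s < 4 := by nlinarith
  have hα : (1 : ℝ) < (2 + s) / 3 := by linarith
  have hβ0 : (0 : ℝ) < (7 - s) / 6 := by linarith
  have hβ1 : (7 - s) / 6 < 1 := by linarith
  have hlogα : 0 < Real.log ((2 + s) / 3) := Real.log_pos hα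
  have hlogβ : Real.log ((7 - s) / 6) < 0 := Real.log_neg hβ0 hβ1
  -- q is negative
  have hqneg : (q : ℝ) < 0 := by
    rw [hq]
    exact div_neg_of_neg_of_pos hlogβ hlogα
  have hqneg' : q < 0 := by exact_mod_cast hqneg
  have hanum : q.num < 0 := Rat.num_neg.mpr hqneg'
  set m : ℕ := (-q.num).toNat with hm
  have hm1 : 1 ≤ m := by omega
  have hmval : (m : ℤ) = -q.num := Int.toNat_of_nonneg (by omega)
  set b : ℕ := q.den with hb
  have hb1 : 1 ≤ b := q.pos
  -- derive the multiplicative relation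
  have hkey : ((7 - s) / 6) ^ b * ((2 + s) / 3) ^ m = 1 := by
    have h1 : Real.log ((7 - s) / 6) = q * Real.log ((2 + s) / 3) := by
      rw [hq]; field_simp
    have h2 : (b : ℝ) * Real.log ((7 - s) / 6) = (q.num : ℝ) * Real.log ((2 + s) / 3) := by
      rw [h1]
      have : (b : ℝ) * (q : ℝ) = (q.num : ℝ) := by
        rw [hb]
        exact_mod_cast congrArg (Rat.cast : ℚ → ℝ) (Rat.den_mul_eq_num q)
      rw [← mul_assoc, this]
    have h3 : Real.log (((7 - s) / 6) ^ b * ((2 + s) / 3) ^ m) = 0 := by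
      rw [Real.log_mul (by positivity) (by positivity), Real.log_pow, Real.log_pow]
      have : (m : ℝ) = -(q.num : ℝ) := by exact_mod_cast hmval
      rw [this]
      linarith [h2]
    have hpos : 0 < ((7 - s) / 6) ^ b * ((2 + s) / 3) ^ m := by positivity
    have := Real.exp_log hpos
    rw [h3, Real.exp_zero] at this
    linarith
  -- clear denominators
  have hkey2 : (7 - s) ^ b * (2 + s) ^ m = 6 ^ b * 3 ^ m := by
    have h6 : ((7 - s) / 6) ^ b = (7 - s) ^ b / 6 ^ b := div_pow _ _ _
    have h3' : ((2 + s) / 3) ^ m = (2 + s) ^ m / 3 ^ m := div_pow _ _ _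
    rw [h6, h3'] at hkey
    field_simp at hkey
    linarith [hkey]
  -- move to ℤ√13
  have h13 : (0 : ℤ) ≤ 13 := by norm_num
  set f : ℤ√13 →+* ℝ := Zsqrtd.toReal h13 with hf
  have hfz : ∀ z : ℤ√13, f z = (z.re : ℝ) + (z.im : ℝ) * s := fun z => rfl
  have hzeq : ((⟨7, -1⟩ : ℤ√13)) ^ b * ((⟨2, 1⟩ : ℤ√13)) ^ m
      = (6 : ℤ√13) ^ b * (3 : ℤ√13) ^ m := by
    apply Zsqrtd.toReal_injective h13 thirteen_not_square
    rw [map_mul, map_pow, map_pow, map_mul, map_pow, map_pow]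
    rw [hfz ⟨7, -1⟩, hfz ⟨2, 1⟩]
    push_cast
    rw [map_ofNat, map_ofNat]
    convert hkey2 using 3 <;> ring
  -- map to ZMod 9 sending √13 to 2
  set g : ℤ√13 →+* ZMod 9 := Zsqrtd.lift ⟨2, by decide⟩ with hg
  have heq := congrArg g hzeq
  rw [map_mul, map_pow, map_pow, map_mul, map_pow, map_pow] at heq
  have hg7 : g ⟨7, -1⟩ = 5 := by rw [hg]; simp [Zsqrtd.lift]; decide
  have hg2 : g ⟨2, 1⟩ = 4 := by rw [hg]; simp [Zsqrtd.lift]; decide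
  have hg6 : g (6 : ℤ√13) = 6 := map_ofNat g 6
  have hg3 : g (3 : ℤ√13) = 3 := map_ofNat g 3
  rw [hg7, hg2, hg6, hg3] at heq
  -- RHS is zero, LHS is a unit
  have hrhs : (6 : ZMod 9) ^ b * 3 ^ m = 0 := by
    obtain ⟨b', hb'⟩ : ∃ b', b = b' + 1 := ⟨b - 1, by omega⟩
    obtain ⟨m', hm'⟩ : ∃ m', m = m' + 1 := ⟨m - 1, by omega⟩
    rw [hb', hm', pow_succ, pow_succ]
    have h63 : (6 : ZMod 9) * 3 = 0 := by decide
    calc (6:ZMod 9) ^ b' * 6 * (3 ^ m' * 3) = (6 ^ b' * 3 ^ m') * (6 * 3) := by ring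
    _ = 0 := by rw [h63, mul_zero]
  rw [hrhs] at heq
  haveI : Fact (1 < 9) := ⟨by norm_num⟩
  have hu5 : IsUnit (5 : ZMod 9) := by decide
  have hu4 : IsUnit (4 : ZMod 9) := by decide
  exact ((hu5.pow _).mul (hu4.pow _)).ne_zero heq
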